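/- Let h = p + q ∈ GL_n(R) be R-Θ-semisimple with skew part p and symmetric part q, and let G^{h,Θ}(R) = {g ∈ GL_n(R) : ᵗg h g = h}. Then G^{h,Θ}(R) is isomorphic to O(q_+,R) × (Sp(p_- ⊕ p_0, R) ∩ O(q_- ⊕ q_0, R)), where the subscripts refer to the restrictions to the summands M_+, M_-, M_0 of the canonical decomposition of R^n; moreover every g ∈ G^{h,Θ}(R) preserves this decomposition. -/

import Mathlib

/-!
Put `u = (ᵗh)⁻¹ h`. Then `ᵗx h y = ᵗ(u y) h x`, so `u` is an isometry of `h`, hence of its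
symmetric and skew parts `q` and `p` (as `2` is invertible), and `M₊ = ker p = ker (u - 1)`,
`M₋ = ker q = ker (u + 1)`. Θ-semisimplicity provides `r` coprime to `X ∓ 1` with
`(X - 1)(X + 1) r (u) = 0` (from the squarefree minimal polynomial, or `r = ∑ X^(2i)` when
`u^k = 1`), so `Rⁿ = ker (u - 1) ⊕ ker (u + 1) ⊕ ker r(u)`. On an eigenvector `m` of `u` for
`±1`, `b(m, r(u) z) = r(±1) b(m, z)` for `b = q, p`, which puts `ker r(u)` inside `M₀`. Hence
`Rⁿ = M₊ ⊕ W` with `W = M₋ ⊕ M₀`, the two summands are `h`-orthogonal, and `h = q` on `M₊`.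
An isometry of `h` preserves `p` and `q`, hence their kernels and the orthogonals defining `M₀`;
conversely isometries of `q|M₊` and of `(p, q)|W` glue to an isometry of `h`.
-/

open Matrix

/-- `R` is either a field of characteristic `0`, or the ring of integers of a `p`-adic
field with odd residue characteristic. -/
def IsPaperRing (R : Type*) [CommRing R] [IsDomain R] [IsLocalRing R] : Prop :=
  (IsField R ∧ CharZero R) ∨
  (IsDiscreteValuationRing R ∧ IsAdicComplete (IsLocalRing.maximalIdeal R) R ∧
    Finite (IsLocalRing.ResidueField R) ∧ ringChar (IsLocalRing.ResidueField R) ≠ 2)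

/-- A matrix `g` is `R`-semisimple. -/
def IsRSemisimpleMatrix (R : Type*) [CommRing R] [IsLocalRing R] {n : ℕ}
    (g : Matrix (Fin n) (Fin n) R) : Prop :=
  (IsField R ∧ Module.End.IsSemisimple (Matrix.toLin' g)) ∨
  (∃ k : ℕ, 0 < k ∧ Nat.Coprime k (ringChar (IsLocalRing.ResidueField R)) ∧ g ^ k = 1)

open Polynomial

namespace Polynomial

variable {R : Type*} [CommRing R]

theorem isCoprime_X_sub_C_of_isUnit_eval {a : R} {f : R[X]} (hf : IsUnit (f.eval a)) :
    IsCoprime (X - C a) f := by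
  obtain ⟨s, hs⟩ := X_sub_C_dvd_sub_C_eval (a := a) (p := f)
  obtain ⟨e, he⟩ := hf.exists_left_inv
  refine ⟨-(C e * s), C e, ?_⟩
  rw [← C_1, ← he, C_mul]
  linear_combination (C e) * hs

theorem isUnit_eval_of_isCoprime_X_sub_C {a : R} {f : R[X]} (h : IsCoprime (X - C a) f) :
    IsUnit (f.eval a) := by
  obtain ⟨p, q, hpq⟩ := h
  apply IsUnit.of_mul_eq_one_right (q.eval a)
  simpa using congrArg (eval a) hpq

end Polynomial

theorem isUnit_two_of_isPaperRing {R : Type*} [CommRing R] [IsDomain R] [IsLocalRing R]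
    (hR : IsPaperRing R) : IsUnit (2 : R) := by
  rcases hR with ⟨hfield, _⟩ | ⟨_, _, _, hchar⟩
  · let _ := hfield.toField
    exact (two_ne_zero : (2 : R) ≠ 0).isUnit
  · rw [← IsLocalRing.residue_ne_zero_iff_isUnit, map_ofNat]
    exact Ring.two_ne_zero hchar

theorem IsLocalRing.isUnit_natCast_of_coprime_ringChar {R : Type*} [CommRing R] [IsLocalRing R]
    {k : ℕ} (hk : k.Coprime (ringChar (ResidueField R))) : IsUnit (k : R) := by
  rw [← residue_ne_zero_iff_isUnit, map_natCast, Ne, ringChar.spec]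
  exact fun hdvd => CharP.ringChar_ne_one (hk.symm.eq_one_of_dvd hdvd)

theorem Squarefree.exists_dvd_mul_isCoprime {K : Type*} [Field K] {μ : K[X]} (hμ : Squarefree μ)
    (d : K[X]) : ∃ r, μ ∣ d * r ∧ IsCoprime d r := by
  classical
  set g := EuclideanDomain.gcd μ d
  obtain ⟨r, hr⟩ : g ∣ μ := EuclideanDomain.gcd_dvd_left μ d
  obtain ⟨t, ht⟩ : g ∣ d := EuclideanDomain.gcd_dvd_right μ d
  refine ⟨r, ⟨t, by rw [ht, mul_right_comm, ← hr]⟩,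
    isCoprime_of_prime_dvd ?_ fun z hz hzd hzr => ?_⟩
  · rintro ⟨-, rfl⟩
    exact hμ.ne_zero (by rw [hr, mul_zero])
  · have hzg := EuclideanDomain.dvd_gcd (hzr.trans ⟨_, hr.trans (mul_comm _ _)⟩) hzd
    exact hz.not_isUnit (hμ z (hr ▸ mul_dvd_mul hzg hzr))

theorem Module.End.IsSemisimple.exists_aeval_eq_zero {K V : Type*} [Field K] [AddCommGroup V]
    [Module K V] [FiniteDimensional K V] {f : Module.End K V} (hf : f.IsSemisimple) :
    ∃ r : K[X], aeval f ((X - C 1) * (X - C (-1)) * r) = 0 ∧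
      IsCoprime (X - C 1) r ∧ IsCoprime (X - C (-1)) r := by
  obtain ⟨r, hdvd, hcop⟩ :=
    hf.minpoly_squarefree.exists_dvd_mul_isCoprime ((X - C 1) * (X - C (-1)))
  exact ⟨r, aeval_eq_zero_of_dvd_aeval_eq_zero hdvd (minpoly.aeval K f),
    hcop.of_mul_left_left, hcop.of_mul_left_right⟩

theorem exists_aeval_eq_zero_of_pow_eq_one {R A : Type*} [CommRing R] [Ring A] [Algebra R A]
    {a : A} {k : ℕ} (ha : a ^ k = 1) (hk : IsUnit (k : R)) :
    ∃ r : R[X], aeval a ((X - C 1) * (X - C (-1)) * r) = 0 ∧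
      IsCoprime (X - C 1) r ∧ IsCoprime (X - C (-1)) r := by
  have heval : ∀ c : R, c ^ 2 = 1 → (∑ i ∈ Finset.range k, (X ^ 2) ^ i : R[X]).eval c = k := by
    intro c hc
    simp [eval_finsetSum, hc]
  refine ⟨∑ i ∈ Finset.range k, (X ^ 2) ^ i, ?_,
    isCoprime_X_sub_C_of_isUnit_eval (by rwa [heval 1 (one_pow 2)]),
    isCoprime_X_sub_C_of_isUnit_eval (by rwa [heval (-1) (by norm_num)])⟩
  have hprod : (X - C 1) * (X - C (-1)) * ∑ i ∈ Finset.range k, (X ^ 2) ^ i =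
      ((X : R[X]) ^ 2) ^ k - 1 := by
    rw [mul_comm, ← geom_sum_mul]
    simp only [map_neg, map_one]
    ring
  rw [hprod, map_sub, map_pow, map_pow, aeval_X, map_one, ← pow_mul, mul_comm, pow_mul, ha,
    one_pow, sub_self]

theorem IsRSemisimpleMatrix.exists_aeval_toLin'_eq_zero {R : Type*} [CommRing R] [IsLocalRing R]
    {n : ℕ} {g : Matrix (Fin n) (Fin n) R} (hg : IsRSemisimpleMatrix R g) :
    ∃ r : R[X], aeval (Matrix.toLin' g) ((X - C 1) * (X - C (-1)) * r) = 0 ∧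
      IsCoprime (X - C 1) r ∧ IsCoprime (X - C (-1)) r := by
  rcases hg with ⟨hfield, hss⟩ | ⟨k, -, hk, hgk⟩
  · let _ := hfield.toField
    exact hss.exists_aeval_eq_zero
  · refine exists_aeval_eq_zero_of_pow_eq_one ?_
      (IsLocalRing.isUnit_natCast_of_coprime_ringChar hk)
    rw [← Matrix.toLin'_pow, hgk, Matrix.toLin'_one, Module.End.one_eq_id]

namespace LinearEquiv

variable {R E : Type*} [Ring R] [AddCommGroup E] [Module R E] {p q : Submodule R E}

noncomputable def ofIsCompl (h : IsCompl p q) (a : p ≃ₗ[R] p) (c : q ≃ₗ[R] q) : E ≃ₗ[R] E :=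
  (Submodule.prodEquivOfIsCompl p q h).symm ≪≫ₗ a.prodCongr c ≪≫ₗ
    Submodule.prodEquivOfIsCompl p q h

variable (h : IsCompl p q) (a : p ≃ₗ[R] p) (c : q ≃ₗ[R] q)

@[simp]
theorem ofIsCompl_apply_left (x : p) : ofIsCompl h a c x = a x := by
  simp [ofIsCompl]

@[simp]
theorem ofIsCompl_apply_right (y : q) : ofIsCompl h a c y = c y := by
  simp [ofIsCompl]

end LinearEquiv

namespace LinearMap

variable {R M : Type*} [CommRing R] [AddCommGroup M] [Module R M]

section Isometry

variable {F : M →ₗ[R] M →ₗ[R] R} {g : M ≃ₗ[R] M}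

theorem isometry_of_apply_eq_apply_swap {u : M → M} (hu : ∀ x y, F x y = F (u y) x)
    (x y : M) : F (u x) (u y) = F x y := by
  rw [← hu, ← hu]

theorem isometry_symm (hg : ∀ x y, F (g x) (g y) = F x y) (x y : M) :
    F (g.symm x) (g.symm y) = F x y := by
  rw [← hg, g.apply_symm_apply, g.apply_symm_apply]

theorem mem_ker_flip_iff {x : M} : x ∈ ker F.flip ↔ ∀ y, F y x = 0 := by
  simp [LinearMap.ext_iff]

theorem map_mem_ker_flip (hg : ∀ x y, F (g x) (g y) = F x y) {x : M} (hx : x ∈ ker F.flip) :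
    g x ∈ ker F.flip := by
  rw [mem_ker_flip_iff] at hx ⊢
  intro y
  rw [← g.apply_symm_apply y, hg, hx]

theorem map_mem_orthogonalBilin (hg : ∀ x y, F (g x) (g y) = F x y) {N : Submodule R M}
    (hN : ∀ m ∈ N, g.symm m ∈ N) {x : M} (hx : x ∈ N.orthogonalBilin F) :
    g x ∈ N.orthogonalBilin F := by
  rw [Submodule.mem_orthogonalBilin_iff] at hx ⊢
  intro m hm
  rw [← g.apply_symm_apply m, hg, hx _ (hN m hm)]

theorem apply_aeval_of_apply_eq_smul {u : Module.End R M} (hu : ∀ x y, F (u x) (u y) = F x y)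
    {c : R} (hc : c * c = 1) {m : M} (hm : u m = c • m) (f : R[X]) (w : M) :
    F m (aeval u f w) = f.eval c * F m w := by
  have hstep : ∀ w, F m (u w) = c * F m w := fun w =>
    calc F m (u w) = F ((c * c) • m) (u w) := by rw [hc, one_smul]
      _ = c * F (u m) (u w) := by rw [mul_smul, ← hm, map_smul, smul_apply, smul_eq_mul]
      _ = c * F m w := by rw [hu]
  -- `f = f(c) + (X - c) s`, and `hstep` kills the `(u - c)` term
  obtain ⟨s, hs⟩ := X_sub_C_dvd_sub_C_eval (a := c) (p := f)
  rw [sub_eq_iff_eq_add] at hs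
  rw [hs, map_add, map_mul, aeval_C, map_sub, aeval_X, aeval_C, LinearMap.add_apply,
    Module.End.mul_apply, LinearMap.sub_apply, map_add, map_sub, hstep]
  simp [Algebra.algebraMap_eq_smul_one, mul_comm]

theorem apply_add_add_of_isOrtho {p q : Submodule R M}
    (horth : ∀ x ∈ p, ∀ y ∈ q, F x y = 0 ∧ F y x = 0) {x x' y y' : M} (hx : x ∈ p)
    (hx' : x' ∈ p) (hy : y ∈ q) (hy' : y' ∈ q) :
    F (x + y) (x' + y') = F x x' + F y y' := by
  simp [(horth x hx y' hy').1, (horth x' hx' y hy).2]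

theorem isometry_ofIsCompl {p q : Submodule R M} (h : IsCompl p q)
    (horth : ∀ x ∈ p, ∀ y ∈ q, F x y = 0 ∧ F y x = 0)
    {a : p ≃ₗ[R] p} (ha : ∀ x y : p, F (a x) (a y) = F x y)
    {c : q ≃ₗ[R] q} (hc : ∀ x y : q, F (c x) (c y) = F x y) (v w : M) :
    F (LinearEquiv.ofIsCompl h a c v) (LinearEquiv.ofIsCompl h a c w) = F v w := by
  obtain ⟨⟨x, y⟩, rfl⟩ := (Submodule.prodEquivOfIsCompl p q h).surjective v
  obtain ⟨⟨x', y'⟩, rfl⟩ := (Submodule.prodEquivOfIsCompl p q h).surjective w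
  have hg : ∀ (x : p) (y : q), LinearEquiv.ofIsCompl h a c (x + y) = a x + c y := fun x y => by
    rw [map_add, LinearEquiv.ofIsCompl_apply_left, LinearEquiv.ofIsCompl_apply_right]
  simp only [Submodule.coe_prodEquivOfIsCompl', hg]
  rw [apply_add_add_of_isOrtho horth (a x).2 (a x').2 (c y).2 (c y').2,
    apply_add_add_of_isOrtho horth x.2 x'.2 y.2 y'.2, ha, hc]

end Isometry

/-- `M₀` of the decomposition `M = M₊ ⊕ M₋ ⊕ M₀`, where `M₊ = ker P.flip`, `M₋ = ker Q.flip`. -/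
def zeroPart (P Q : M →ₗ[R] M →ₗ[R] R) : Submodule R M :=
  (ker P.flip).orthogonalBilin Q ⊓ (ker Q.flip).orthogonalBilin P

theorem sup_zeroPart_le_orthogonalBilin (P Q : M →ₗ[R] M →ₗ[R] R) :
    ker Q.flip ⊔ zeroPart P Q ≤ (ker P.flip).orthogonalBilin Q :=
  sup_le (fun _ hy m _ => mem_ker_flip_iff.mp hy m) inf_le_left

section SymmSkew

variable {B P Q : M →ₗ[R] M →ₗ[R] R} (hBPQ : B = P + Q) (hP : ∀ x y, P y x = -P x y)
include hBPQ hP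

theorem apply_eq_symmPart_apply_of_mem_ker_flip {x : M} (hx : x ∈ ker P.flip) (y : M) :
    B x y = Q x y := by
  rw [hBPQ, add_apply, add_apply, hP y x, mem_ker_flip_iff.mp hx, neg_zero, zero_add]

variable (hQ : ∀ x y, Q y x = Q x y)
include hQ

theorem two_mul_symmPart_apply (x y : M) : 2 * Q x y = B x y + B y x := by
  simp only [hBPQ, add_apply]
  rw [hP x y, hQ x y]; ring

theorem two_mul_skewPart_apply (x y : M) : 2 * P x y = B x y - B y x := by
  simp only [hBPQ, add_apply]
  rw [hP x y, hQ x y]; ring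

theorem apply_eq_zero_of_mem_orthogonalBilin {x w : M} (hx : x ∈ ker P.flip)
    (hw : w ∈ (ker P.flip).orthogonalBilin Q) : B x w = 0 ∧ B w x = 0 := by
  have hQxw : Q x w = 0 := hw x hx
  refine ⟨by rw [apply_eq_symmPart_apply_of_mem_ker_flip hBPQ hP hx, hQxw], ?_⟩
  rw [hBPQ, add_apply, add_apply, mem_ker_flip_iff.mp hx, hQ, hQxw, add_zero]

theorem disjoint_ker_flip_of_codisjoint (hB : B.SeparatingLeft) {W : Submodule R M}
    (hW : W ≤ (ker P.flip).orthogonalBilin Q) (hcod : Codisjoint (ker P.flip) W) :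
    Disjoint (ker P.flip) W := by
  rw [Submodule.disjoint_def]
  intro x hxP hxW
  refine hB x fun v => ?_
  obtain ⟨y, hy, w, hw, rfl⟩ := Submodule.mem_sup.mp (hcod.eq_top ▸ Submodule.mem_top : v ∈ _)
  rw [map_add, (apply_eq_zero_of_mem_orthogonalBilin hBPQ hP hQ hxP (hW hw)).1,
    apply_eq_symmPart_apply_of_mem_ker_flip hBPQ hP hxP, hQ, hW hxW y hy, add_zero]

theorem isometry_ofIsCompl_of_le_orthogonalBilin {W : Submodule R M}
    (hc : IsCompl (ker P.flip) W) (hW : W ≤ (ker P.flip).orthogonalBilin Q)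
    {a : ker P.flip ≃ₗ[R] ker P.flip} (ha : ∀ x y : ker P.flip, Q (a x) (a y) = Q x y)
    {c : W ≃ₗ[R] W} (hcP : ∀ x y : W, P (c x) (c y) = P x y)
    (hcQ : ∀ x y : W, Q (c x) (c y) = Q x y) (v w : M) :
    B (LinearEquiv.ofIsCompl hc a c v) (LinearEquiv.ofIsCompl hc a c w) = B v w := by
  refine isometry_ofIsCompl hc
    (fun x hx w hw => apply_eq_zero_of_mem_orthogonalBilin hBPQ hP hQ hx (hW hw)) (fun x y => ?_)
    (fun x y => by simp only [hBPQ, add_apply, hcP, hcQ]) v w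
  rw [apply_eq_symmPart_apply_of_mem_ker_flip hBPQ hP (a x).2,
    apply_eq_symmPart_apply_of_mem_ker_flip hBPQ hP x.2, ha]

variable (h2 : IsUnit (2 : R))
include h2

theorem isometry_symmPart {g : M → M} (hg : ∀ x y, B (g x) (g y) = B x y) (x y : M) :
    Q (g x) (g y) = Q x y :=
  h2.mul_left_cancel <| by
    rw [two_mul_symmPart_apply hBPQ hP hQ, two_mul_symmPart_apply hBPQ hP hQ, hg, hg]

theorem isometry_skewPart {g : M → M} (hg : ∀ x y, B (g x) (g y) = B x y) (x y : M) :
    P (g x) (g y) = P x y :=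
  h2.mul_left_cancel <| by
    rw [two_mul_skewPart_apply hBPQ hP hQ, two_mul_skewPart_apply hBPQ hP hQ, hg, hg]

theorem map_mem_zeroPart {g : M ≃ₗ[R] M} (hg : ∀ x y, B (g x) (g y) = B x y) {x : M}
    (hx : x ∈ zeroPart P Q) : g x ∈ zeroPart P Q := by
  have hPg := isometry_skewPart hBPQ hP hQ h2 hg
  have hQg := isometry_symmPart hBPQ hP hQ h2 hg
  exact ⟨map_mem_orthogonalBilin hQg (fun m hm => map_mem_ker_flip (isometry_symm hPg) hm) hx.1,
    map_mem_orthogonalBilin hPg (fun m hm => map_mem_ker_flip (isometry_symm hQg) hm) hx.2⟩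

section Asymmetry

variable (hB : B.SeparatingLeft) {u : Module.End R M} (hu : ∀ x y, B x y = B (u y) x)
include hB hu

theorem mem_ker_flip_skewPart_iff {x : M} : x ∈ ker P.flip ↔ u x = x := by
  have key : ∀ y, 2 * P y x = B (u x - x) y := fun y => by
    rw [two_mul_skewPart_apply hBPQ hP hQ, hu y x, map_sub, LinearMap.sub_apply]
  rw [mem_ker_flip_iff, ← sub_eq_zero]
  simp_rw [← h2.mul_right_eq_zero (b := P _ x), key]
  exact ⟨hB _, fun h y => by rw [h, map_zero, LinearMap.zero_apply]⟩

theorem mem_ker_flip_symmPart_iff {x : M} : x ∈ ker Q.flip ↔ u x = -x := by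
  have key : ∀ y, 2 * Q y x = B (u x + x) y := fun y => by
    rw [two_mul_symmPart_apply hBPQ hP hQ, hu y x, map_add, LinearMap.add_apply]
  rw [mem_ker_flip_iff, eq_neg_iff_add_eq_zero]
  simp_rw [← h2.mul_right_eq_zero (b := Q _ x), key]
  exact ⟨hB _, fun h y => by rw [h, map_zero, LinearMap.zero_apply]⟩

theorem ker_aeval_le_zeroPart {r : R[X]} (hr1 : IsUnit (r.eval 1)) (hr2 : IsUnit (r.eval (-1))) :
    ker (aeval u r) ≤ zeroPart P Q := by
  have huB := isometry_of_apply_eq_apply_swap hu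
  intro z hz
  refine ⟨fun m hm => ?_, fun m hm => ?_⟩
  · have hm' : u m = (1 : R) • m := by
      rw [one_smul, ← mem_ker_flip_skewPart_iff hBPQ hP hQ h2 hB hu]; exact hm
    have h := apply_aeval_of_apply_eq_smul (isometry_symmPart hBPQ hP hQ h2 huB) (one_mul 1) hm' r z
    rwa [LinearMap.mem_ker.mp hz, map_zero, eq_comm, hr1.mul_right_eq_zero] at h
  · have hm' : u m = (-1 : R) • m := by
      rw [neg_one_smul, ← mem_ker_flip_symmPart_iff hBPQ hP hQ h2 hB hu]; exact hm
    have h :=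
      apply_aeval_of_apply_eq_smul (isometry_skewPart hBPQ hP hQ h2 huB) (by norm_num) hm' r z
    rwa [LinearMap.mem_ker.mp hz, map_zero, eq_comm, hr2.mul_right_eq_zero] at h

theorem codisjoint_ker_flip_sup_zeroPart {r : R[X]}
    (hr : aeval u ((X - C 1) * (X - C (-1)) * r) = 0) (hr1 : IsCoprime (X - C 1) r)
    (hr2 : IsCoprime (X - C (-1)) r) : Codisjoint (ker P.flip) (ker Q.flip ⊔ zeroPart P Q) := by
  have hplus : ker (aeval u (X - C (1 : R))) = ker P.flip := by
    ext x
    simp [sub_eq_zero, mem_ker_flip_skewPart_iff hBPQ hP hQ h2 hB hu]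
  have hminus : ker (aeval u (X - C (-1 : R))) = ker Q.flip := by
    ext x
    simp [← eq_neg_iff_add_eq_zero, mem_ker_flip_symmPart_iff hBPQ hP hQ h2 hB hu]
  have hcop : IsCoprime (X - C (1 : R)) (X - C (-1)) :=
    isCoprime_X_sub_C_of_isUnit_sub (by rw [sub_neg_eq_add, one_add_one_eq_two]; exact h2)
  rw [codisjoint_iff, ← sup_assoc, ← hplus, ← hminus,
    sup_ker_aeval_eq_ker_aeval_mul_of_coprime _ hcop, eq_top_iff]
  calc ⊤ = ker (aeval u ((X - C 1) * (X - C (-1)) * r)) := by rw [hr, ker_zero]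
    _ = ker (aeval u ((X - C 1) * (X - C (-1)))) ⊔ ker (aeval u r) :=
      (sup_ker_aeval_eq_ker_aeval_mul_of_coprime _ (hr1.mul_left hr2)).symm
    _ ≤ _ := sup_le_sup_left (ker_aeval_le_zeroPart hBPQ hP hQ h2 hB hu
      (isUnit_eval_of_isCoprime_X_sub_C hr1) (isUnit_eval_of_isCoprime_X_sub_C hr2)) _

theorem isCompl_ker_flip_sup_zeroPart {r : R[X]}
    (hr : aeval u ((X - C 1) * (X - C (-1)) * r) = 0) (hr1 : IsCoprime (X - C 1) r)
    (hr2 : IsCoprime (X - C (-1)) r) : IsCompl (ker P.flip) (ker Q.flip ⊔ zeroPart P Q) :=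
  have hcod := codisjoint_ker_flip_sup_zeroPart hBPQ hP hQ h2 hB hu hr hr1 hr2
  ⟨disjoint_ker_flip_of_codisjoint hBPQ hP hQ hB (sup_zeroPart_le_orthogonalBilin P Q) hcod, hcod⟩

end Asymmetry

end SymmSkew

end LinearMap

namespace Matrix

variable {R n : Type*} [CommRing R] [Fintype n] [DecidableEq n]

theorem toLinearMap₂'_transpose_apply (A : Matrix n n R) (x y : n → R) :
    toLinearMap₂' R Aᵀ x y = toLinearMap₂' R A y x := by
  rw [toLinearMap₂'_apply', toLinearMap₂'_apply', dotProduct_mulVec, vecMul_transpose,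
    dotProduct_comm]

theorem ker_toLin'_eq_ker_flip (A : Matrix n n R) :
    LinearMap.ker (toLin' A) =
      LinearMap.ker (toLinearMap₂' R A : (n → R) →ₗ[R] (n → R) →ₗ[R] R).flip := by
  ext x
  rw [LinearMap.mem_ker_flip_iff, LinearMap.mem_ker, toLin'_apply, ← dotProduct_eq_zero_iff]
  simp_rw [toLinearMap₂'_apply', dotProduct_comm (A *ᵥ x)]

theorem toLinearMap₂'_apply_eq_apply_toLin'_transpose_inv_mul {h : Matrix n n R}
    (hh : IsUnit h) (x y : n → R) :
    toLinearMap₂' R h x y = toLinearMap₂' R h (toLin' ((hᵀ)⁻¹ * h) y) x := by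
  have hdetT : IsUnit hᵀ.det := by rwa [det_transpose, ← isUnit_iff_isUnit_det]
  rw [← toLinearMap₂'_transpose_apply h x, toLinearMap₂'_apply', toLinearMap₂'_apply',
    toLin'_apply, mulVec_mulVec, ← mul_assoc, mul_nonsing_inv _ hdetT, one_mul]

end Matrix

open LinearMap in
/-- Structure of the twisted centralizer `G^{h,Θ}(R) = {g : ᵗg h g = h}` of an
`R`-Θ-semisimple `h = p + q`: every such `g` preserves the decomposition
`Rⁿ = M₊ ⊕ M₋ ⊕ M₀`, and restriction gives a group isomorphism (expressed below as an
injective and surjective multiplicativity-preserving restriction correspondence) of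
`G^{h,Θ}(R)` with `O(q₊, R) × (Sp(p₋ ⊕ p₀, R) ∩ O(q₋ ⊕ q₀, R))`, where the second factor
acts on `W = M₋ ⊕ M₀`. -/
theorem twisted_centralizer_structure
    {R : Type*} [CommRing R] [IsDomain R] [IsLocalRing R] (hR : IsPaperRing R)
    {n : ℕ} (h pm qm : Matrix (Fin n) (Fin n) R) (hinv : IsUnit h)
    (hss : IsRSemisimpleMatrix R ((hᵀ)⁻¹ * h))
    (hsum : h = pm + qm) (hskew : pmᵀ = -pm) (hsymm : qmᵀ = qm) :
    ∀ (Bh Bp Bq : (Fin n → R) →ₗ[R] (Fin n → R) →ₗ[R] R),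
      Bh = Matrix.toLinearMap₂' R h → Bp = Matrix.toLinearMap₂' R pm →
      Bq = Matrix.toLinearMap₂' R qm →
    ∀ (Mplus Mminus M0 W : Submodule R (Fin n → R)),
      Mplus = LinearMap.ker (Matrix.toLin' pm) →
      Mminus = LinearMap.ker (Matrix.toLin' qm) →
      M0 = (Mplus.orthogonalBilin Bq) ⊓ (Mminus.orthogonalBilin Bp) →
      W = Mminus ⊔ M0 →
      -- every element of `G^{h,Θ}(R)` preserves the decomposition
      ((∀ g : (Fin n → R) ≃ₗ[R] (Fin n → R), (∀ x y, Bh (g x) (g y) = Bh x y) →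
        (∀ x ∈ Mplus, g x ∈ Mplus) ∧ (∀ x ∈ Mminus, g x ∈ Mminus) ∧
        (∀ x ∈ M0, g x ∈ M0)) ∧
      -- the restriction map `g ↦ (g|M₊, g|W)` is injective …
      (∀ g g' : (Fin n → R) ≃ₗ[R] (Fin n → R),
        (∀ x y, Bh (g x) (g y) = Bh x y) → (∀ x y, Bh (g' x) (g' y) = Bh x y) →
        (∀ x ∈ Mplus, g x = g' x) → (∀ x ∈ W, g x = g' x) → g = g') ∧
      -- … and surjective onto `O(q₊) × (Sp(p₋ ⊕ p₀) ∩ O(q₋ ⊕ q₀))`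
      (∀ a : Mplus ≃ₗ[R] Mplus, (∀ x y : Mplus, Bq (a x) (a y) = Bq x y) →
        ∀ c : W ≃ₗ[R] W, (∀ x y : W, Bp (c x) (c y) = Bp x y) →
          (∀ x y : W, Bq (c x) (c y) = Bq x y) →
          ∃ g : (Fin n → R) ≃ₗ[R] (Fin n → R), (∀ x y, Bh (g x) (g y) = Bh x y) ∧
            (∀ x : Mplus, g x = a x) ∧ (∀ x : W, g x = c x))) := by
  intro Bh Bp Bq hBh hBp hBq Mplus Mminus M0 W hMp hMm hM0 hW
  rw [Matrix.ker_toLin'_eq_ker_flip, ← hBp] at hMp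
  rw [Matrix.ker_toLin'_eq_ker_flip, ← hBq] at hMm
  subst hMp hMm hM0 hW
  have hBPQ : Bh = Bp + Bq := by rw [hBh, hBp, hBq, hsum, map_add]
  have hP (x y) : Bp y x = -Bp x y := by
    rw [hBp, ← toLinearMap₂'_transpose_apply, hskew, map_neg, LinearMap.neg_apply,
      LinearMap.neg_apply]
  have hQ (x y) : Bq y x = Bq x y := by
    rw [hBq, ← toLinearMap₂'_transpose_apply, hsymm]
  have h2 := isUnit_two_of_isPaperRing hR
  have hB : Bh.SeparatingLeft := hBh ▸
    separatingLeft_toLinearMap₂'_of_det_ne_zero' ((isUnit_iff_isUnit_det h).mp hinv).ne_zero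
  obtain ⟨r, hr, hr1, hr2⟩ := hss.exists_aeval_toLin'_eq_zero
  have hcompl := isCompl_ker_flip_sup_zeroPart hBPQ hP hQ h2 hB
    (hBh ▸ toLinearMap₂'_apply_eq_apply_toLin'_transpose_inv_mul hinv) hr hr1 hr2
  refine ⟨fun g hg => ⟨fun x hx => map_mem_ker_flip (isometry_skewPart hBPQ hP hQ h2 hg) hx,
      fun x hx => map_mem_ker_flip (isometry_symmPart hBPQ hP hQ h2 hg) hx,
      fun x hx => map_mem_zeroPart hBPQ hP hQ h2 hg hx⟩,
    fun g g' _ _ hplus hW => LinearEquiv.toLinearMap_injective <|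
      ext_on_codisjoint hcompl.codisjoint (fun x hx => hplus x hx) (fun x hx => hW x hx),
    fun a ha c hcP hcQ => ⟨LinearEquiv.ofIsCompl hcompl a c,
      isometry_ofIsCompl_of_le_orthogonalBilin hBPQ hP hQ hcompl
        (sup_zeroPart_le_orthogonalBilin _ _) ha hcP hcQ,
      LinearEquiv.ofIsCompl_apply_left hcompl a c, LinearEquiv.ofIsCompl_apply_right hcompl a c⟩⟩
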